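/- If every hyperplane orthogonal to dimension i intersects at most k boxes of a finite set B of n boxes in R^d (i.e., the i-th profile is at most k), then restricting all boxes to the slabs of any partition of the domain into slabs each containing at most 2k endpoints yields an intersection graph (of the interiors of the restricted boxes) whose treewidth is at most 3k − 1. -/

import Mathlib

/-!
The slabs, ordered along dimension `i`, form a path, and each restricted box lies in the bag
of its own slab. Interiors of distinct slabs are disjoint, so two restricted boxes whose
interiors meet lie in the same slab; the decomposition is therefore valid. A box meeting the
slab `[s, t]` either contains `s` or `t` in its `i`-th projection (at most `k` boxes each, by
the profile bound) or has both endpoints strictly inside; the latter are counted twice among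
the at most `2k` endpoints inside the slab. Hence every bag has at most `3k` elements.
-/

open MeasureTheory Set SimpleGraph
open scoped Classical

/-- An axis-parallel box in `ℝ^d`, given by its lower and upper corners. -/
abbrev BoxT (d : ℕ) := (Fin d → ℝ) × (Fin d → ℝ)

/-- The set of points of a box: the product of the closed intervals. -/
def boxSet {d : ℕ} (b : BoxT d) : Set (Fin d → ℝ) := Set.Icc b.1 b.2

/-- The `j`-th slab orthogonal to dimension `i`, determined by the cut values `a`. -/
def slabSet {d m : ℕ} (i : Fin d) (a : Fin (m + 1) → ℝ) (j : Fin m) : Set (Fin d → ℝ) :=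
  {x | a j.castSucc ≤ x i ∧ x i ≤ a j.succ}

/-- The restricted boxes: pairs `(b, j)` with `b ∈ B` meeting slab `j`; the point set of
the restricted box `(b, j)` is `boxSet b ∩ slabSet i a j`. -/
noncomputable def restr {d m : ℕ} (B : Finset (BoxT d)) (i : Fin d)
    (a : Fin (m + 1) → ℝ) : Finset (BoxT d × Fin m) :=
  (B ×ˢ Finset.univ).filter (fun p => (boxSet p.1 ∩ slabSet i a p.2).Nonempty)

/-- The intersection graph of the interiors of the restricted boxes. -/
noncomputable def rGraph {d m : ℕ} (B : Finset (BoxT d)) (i : Fin d)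
    (a : Fin (m + 1) → ℝ) : SimpleGraph {p : BoxT d × Fin m // p ∈ restr B i a} :=
  SimpleGraph.fromRel (fun p q =>
    (interior (boxSet p.1.1 ∩ slabSet i a p.1.2)
      ∩ interior (boxSet q.1.1 ∩ slabSet i a q.1.2)).Nonempty)

/-- The bag of slab `j`: the restricted boxes lying in slab `j`. -/
noncomputable def rBag {d m : ℕ} (B : Finset (BoxT d)) (i : Fin d)
    (a : Fin (m + 1) → ℝ) (j : Fin m) : Set {p : BoxT d × Fin m // p ∈ restr B i a} :=
  {p | p.1.2 = j}

open Finset Function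

namespace SimpleGraph

lemma pathGraph_isBridge {m : ℕ} {x y : Fin m} (hxy : x.val + 1 = y.val) :
    (pathGraph m).IsBridge s(x, y) := by
  rintro ⟨w⟩
  obtain ⟨d, -, hfst, hsnd⟩ :=
    w.exists_boundary_dart {z | z.val ≤ x.val} (Nat.le_refl _) (by simp; omega)
  obtain ⟨hadj, hne⟩ := deleteEdges_adj.1 d.adj
  simp only [Set.mem_ofPred_eq, not_le] at hfst hsnd
  have hd : d.fst.val + 1 = d.snd.val := by
    rcases pathGraph_adj.1 hadj with h | h <;> omega
  have hx : d.fst = x := Fin.ext (by omega)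
  have hy : d.snd = y := Fin.ext (by omega)
  exact hne (by simp [hx, hy])

lemma pathGraph_isTree (n : ℕ) : (pathGraph (n + 1)).IsTree := by
  refine ⟨pathGraph_connected n, isAcyclic_iff_forall_adj_isBridge.2 fun v w hvw => ?_⟩
  rcases pathGraph_adj.1 hvw with h | h
  · exact pathGraph_isBridge h
  · exact Sym2.eq_swap ▸ pathGraph_isBridge h

end SimpleGraph

lemma two_mul_card_filter_Icc_inter_nonempty_le {ι : Type*} (B : Finset ι) (lo hi : ι → ℝ)
    (s t : ℝ) :
    2 * #{b ∈ B | (Set.Icc (lo b) (hi b) ∩ Set.Icc s t).Nonempty} ≤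
      2 * #{b ∈ B | lo b ≤ s ∧ s ≤ hi b} + 2 * #{b ∈ B | lo b ≤ t ∧ t ≤ hi b}
        + (#{b ∈ B | s < lo b ∧ lo b < t} + #{b ∈ B | s < hi b ∧ hi b < t}) := by
  set L := {b ∈ B | s < lo b ∧ lo b < t}
  set H := {b ∈ B | s < hi b ∧ hi b < t}
  have hsub : {b ∈ B | (Set.Icc (lo b) (hi b) ∩ Set.Icc s t).Nonempty} ⊆
      {b ∈ B | lo b ≤ s ∧ s ≤ hi b} ∪ {b ∈ B | lo b ≤ t ∧ t ≤ hi b} ∪ L ∩ H := by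
    intro b hb
    obtain ⟨hbB, x, ⟨hlo, hhi⟩, hs, ht⟩ := mem_filter.1 hb
    simp only [L, H, Finset.mem_union, Finset.mem_inter, Finset.mem_filter]
    by_cases hls : lo b ≤ s
    · exact .inl (.inl ⟨hbB, hls, by linarith⟩)
    by_cases hth : t ≤ hi b
    · exact .inl (.inr ⟨hbB, by linarith, hth⟩)
    exact .inr ⟨⟨hbB, by linarith, by linarith⟩, ⟨hbB, by linarith, by linarith⟩⟩
  have hLH : 2 * #(L ∩ H) ≤ #L + #H := by
    have := Finset.card_le_card (Finset.inter_subset_union (s := L) (t := H))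
    have := Finset.card_inter_add_card_union L H
    omega
  have := (Finset.card_le_card hsub).trans <|
    (Finset.card_union_le _ _).trans (Nat.add_le_add_right (Finset.card_union_le _ _) _)
  omega

section Slabs

variable {d m : ℕ} {i : Fin d} {a : Fin (m + 1) → ℝ}

lemma interior_slabSet (j : Fin m) :
    interior (slabSet i a j) = {x | a j.castSucc < x i ∧ x i < a j.succ} := by
  have : slabSet i a j = eval i ⁻¹' Set.Icc (a j.castSucc) (a j.succ) := rfl
  rw [this, ← (isOpenMap_eval i).preimage_interior_eq_interior_preimage (continuous_apply i),
    interior_Icc]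
  rfl

lemma pairwise_disjoint_interior_slabSet (ha : Monotone a) :
    Pairwise (Disjoint on fun j => interior (slabSet i a j)) := by
  refine (pairwise_disjoint_on _).2 fun j j' h => ?_
  simp only [interior_slabSet, Set.disjoint_left]
  rintro x ⟨-, hx⟩ ⟨hx', -⟩
  linarith [ha (Fin.succ_le_castSucc_iff.2 h)]

lemma eq_of_interior_inter_slabSet_nonempty (ha : Monotone a) {S T : Set (Fin d → ℝ)}
    {j j' : Fin m} (h : (interior (S ∩ slabSet i a j) ∩ interior (T ∩ slabSet i a j')).Nonempty) :
    j = j' := by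
  by_contra hne
  exact Set.not_disjoint_iff_nonempty_inter.2 h <|
    (pairwise_disjoint_interior_slabSet ha hne).mono (interior_mono Set.inter_subset_right)
      (interior_mono Set.inter_subset_right)

variable {B : Finset (BoxT d)}

@[simp]
lemma mem_rBag {p : {p : BoxT d × Fin m // p ∈ restr B i a}} {j : Fin m} :
    p ∈ rBag B i a j ↔ p.1.2 = j := Iff.rfl

lemma rGraph_adj_snd_eq (ha : Monotone a) {p q : {p : BoxT d × Fin m // p ∈ restr B i a}}
    (h : (rGraph B i a).Adj p q) : p.1.2 = q.1.2 := by
  rw [rGraph, fromRel_adj] at h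
  rcases h.2 with h | h
  · exact eq_of_interior_inter_slabSet_nonempty ha h
  · exact (eq_of_interior_inter_slabSet_nonempty ha h).symm

lemma ncard_rBag_le (j : Fin m) :
    (rBag B i a j).ncard ≤
      #{b ∈ B | (Set.Icc (b.1 i) (b.2 i) ∩ Set.Icc (a j.castSucc) (a j.succ)).Nonempty} := by
  rw [← Set.ncard_coe_finset]
  refine Set.ncard_le_ncard_of_injOn (fun p => p.1.1) (fun p hp => ?_) (fun p hp q hq hpq => ?_)
    (Set.toFinite _)
  · obtain ⟨hpB, x, hxb, hxs⟩ := by simpa [restr] using p.2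
    rw [← mem_rBag.1 hp]
    exact mem_filter.2 ⟨hpB, x i, ⟨hxb.1 i, hxb.2 i⟩, hxs⟩
  · exact Subtype.ext (Prod.ext hpq (hp.trans hq.symm))

end Slabs

theorem stmt18_general {d : ℕ} (B : Finset (BoxT d)) (i : Fin d) (k : ℕ)
    (hprof : ∀ t : ℝ, (B.filter (fun b => b.1 i ≤ t ∧ t ≤ b.2 i)).card ≤ k)
    (m : ℕ) (hm : 1 ≤ m) (a : Fin (m + 1) → ℝ) (ha : Monotone a)
    (hend : ∀ j : Fin m,
      (B.filter (fun b => a j.castSucc < b.1 i ∧ b.1 i < a j.succ)).card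
        + (B.filter (fun b => a j.castSucc < b.2 i ∧ b.2 i < a j.succ)).card ≤ 2 * k) :
    (SimpleGraph.pathGraph m).IsTree ∧
    (∀ p : {p : BoxT d × Fin m // p ∈ restr B i a}, ∃ j, p ∈ rBag B i a j) ∧
    (∀ p q : {p : BoxT d × Fin m // p ∈ restr B i a}, (rGraph B i a).Adj p q →
      ∃ j, p ∈ rBag B i a j ∧ q ∈ rBag B i a j) ∧
    (∀ (p : {p : BoxT d × Fin m // p ∈ restr B i a}) (j j' : Fin m)
      (w : (SimpleGraph.pathGraph m).Walk j j'), w.IsPath →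
      p ∈ rBag B i a j → p ∈ rBag B i a j' → ∀ l ∈ w.support, p ∈ rBag B i a l) ∧
    (∀ j : Fin m, (rBag B i a j).ncard ≤ 3 * k) := by
  refine ⟨?_, fun p => ⟨p.1.2, rfl⟩,
    fun p q h => ⟨p.1.2, rfl, (rGraph_adj_snd_eq ha h).symm⟩, ?_, fun j => ?_⟩
  · obtain ⟨n, rfl⟩ := Nat.exists_eq_add_of_le' hm
    exact SimpleGraph.pathGraph_isTree n
  · intro p j j' w hw hj hj' l hl
    obtain rfl : j = j' := (mem_rBag.1 hj).symm.trans hj'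
    rw [SimpleGraph.Walk.isPath_iff_nil.1 hw |>.eq_nil, SimpleGraph.Walk.support_nil,
      List.mem_singleton] at hl
    exact hl ▸ hj
  · have := (two_mul_card_filter_Icc_inter_nonempty_le B (fun b => b.1 i) (fun b => b.2 i)
      (a j.castSucc) (a j.succ)).trans' (Nat.mul_le_mul_left 2 (ncard_rBag_le j))
    linarith [hprof (a j.castSucc), hprof (a j.succ), hend j]

/-- If the `i`-th profile of `B` is at most `k` and the domain is partitioned into slabs
each containing at most `2k` endpoints strictly inside, then the intersection graph of the
interiors of the restricted boxes has treewidth at most `3k − 1`: the path of slabs with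
one bag per slab is a tree, and a tree decomposition of width at most `3k − 1`. -/
theorem stmt18 {d : ℕ} (B : Finset (BoxT d)) (i : Fin d) (k : ℕ)
    (hprof : ∀ t : ℝ, (B.filter (fun b => b.1 i ≤ t ∧ t ≤ b.2 i)).card ≤ k)
    (m : ℕ) (hm : 1 ≤ m) (a : Fin (m + 1) → ℝ) (ha : Monotone a)
    (hcov : ∀ b ∈ B, a 0 ≤ b.1 i ∧ b.2 i ≤ a (Fin.last m))
    (hend : ∀ j : Fin m,
      (B.filter (fun b => a j.castSucc < b.1 i ∧ b.1 i < a j.succ)).card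
        + (B.filter (fun b => a j.castSucc < b.2 i ∧ b.2 i < a j.succ)).card ≤ 2 * k) :
    (SimpleGraph.pathGraph m).IsTree ∧
    (∀ p : {p : BoxT d × Fin m // p ∈ restr B i a}, ∃ j, p ∈ rBag B i a j) ∧
    (∀ p q : {p : BoxT d × Fin m // p ∈ restr B i a}, (rGraph B i a).Adj p q →
      ∃ j, p ∈ rBag B i a j ∧ q ∈ rBag B i a j) ∧
    (∀ (p : {p : BoxT d × Fin m // p ∈ restr B i a}) (j j' : Fin m)
      (w : (SimpleGraph.pathGraph m).Walk j j'), w.IsPath →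
      p ∈ rBag B i a j → p ∈ rBag B i a j' → ∀ l ∈ w.support, p ∈ rBag B i a l) ∧
    (∀ j : Fin m, (rBag B i a j).ncard ≤ 3 * k) :=
  stmt18_general B i k hprof m hm a ha hend
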